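/- Let X be a geodesic metric space and let Z be a closed, unbounded subset of X. If Z is Morse, then Z is recurrent: for every q ≥ 1 the quantity ρ(q) is finite. -/

import Mathlib

open Metric Set

section Defs

variable {X : Type*} [MetricSpace X]

/-- A unit-speed geodesic segment from `p` to `q`, parameterized on `[0, dist p q]`. -/
def IsGeodesicFrom (γ : ℝ → X) (p q : X) : Prop :=
  γ 0 = p ∧ γ (dist p q) = q ∧
    ∀ s ∈ Set.Icc (0 : ℝ) (dist p q), ∀ t ∈ Set.Icc (0 : ℝ) (dist p q),
      dist (γ s) (γ t) = |s - t|

/-- A geodesic metric space: every pair of points is joined by a geodesic segment. -/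
def IsGeodesicSpace (X : Type*) [MetricSpace X] : Prop :=
  ∀ p q : X, ∃ γ : ℝ → X, IsGeodesicFrom γ p q

/-- CAT(0): a geodesic space in which every geodesic triangle satisfies the comparison
inequality; equivalently (and as formalized here), for every geodesic `γ` from `p` to `q`
and every point `x`, the distance from `x` to a point of `γ` is bounded by the distance
between the corresponding points of a comparison triangle in the Euclidean plane:
`d(x, γ t)² ≤ (1 - t/d)·d(x,p)² + (t/d)·d(x,q)² - (t/d)(1 - t/d)·d²` where `d = d(p,q)`
(written below multiplied through by `d` to avoid division). -/
def IsCAT0Space (X : Type*) [MetricSpace X] : Prop :=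
  IsGeodesicSpace X ∧
    ∀ p q : X, ∀ γ : ℝ → X, IsGeodesicFrom γ p q → ∀ x : X,
      ∀ t ∈ Set.Icc (0 : ℝ) (dist p q),
        dist x (γ t) ^ 2 * dist p q ≤
          (dist p q - t) * dist x p ^ 2 + t * dist x q ^ 2 - t * (dist p q - t) * dist p q

/-- The nearest-point projection `π_Z(x) = {z ∈ Z | d(x,z) = d(x,Z)}`. -/
def projSet (Z : Set X) (x : X) : Set X := {z ∈ Z | dist x z = Metric.infDist x Z}

/-- An `(L,A)`-quasi-geodesic segment defined on `[a,b]`. -/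
def IsQuasiGeodesicOn (L A a b : ℝ) (γ : ℝ → X) : Prop :=
  a ≤ b ∧ ∀ s ∈ Set.Icc a b, ∀ t ∈ Set.Icc a b,
    |s - t| / L - A ≤ dist (γ s) (γ t) ∧ dist (γ s) (γ t) ≤ L * |s - t| + A

/-- `Z` is Morse: for all `L ≥ 1`, `A ≥ 0` there is a bound `M = μ(L,A)` on the distance
to `Z` of points on `(L,A)`-quasi-geodesic segments with both endpoints on `Z`. -/
def IsMorse (Z : Set X) : Prop :=
  ∀ L : ℝ, 1 ≤ L → ∀ A : ℝ, 0 ≤ A → ∃ M : ℝ,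
    ∀ a b : ℝ, ∀ γ : ℝ → X, IsQuasiGeodesicOn L A a b γ → γ a ∈ Z → γ b ∈ Z →
      ∀ s ∈ Set.Icc a b, Metric.infDist (γ s) Z ≤ M

/-- `Z` with the open balls of radius `d(z,z')/3` about `z` and `z'` removed. -/
def recRemoved (Z : Set X) (z z' : X) : Set X :=
  Z \ (Metric.ball z (dist z z' / 3) ∪ Metric.ball z' (dist z z' / 3))

/-- `Z` is `ρ`-recurrent: for every `q ≥ 1`, every rectifiable segment `γ` with endpoints
`z, z' ∈ Z` and `len(γ) ≤ q · d(z,z')` comes within distance `ρ(q)` of `Z'`, where `Z'` is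
`Z` with the open balls of radius `d(z,z')/3` about the endpoints removed.  (Distance to
`Z'` is measured by `infEdist`, which is `∞` when `Z'` is empty, matching
`inf ∅ = ∞` in the definition of `ρ`.) -/
def IsRecurrentWith (Z : Set X) (ρ : ℝ → ℝ) : Prop :=
  ∀ q : ℝ, 1 ≤ q → ∀ a b : ℝ, a ≤ b → ∀ γ : ℝ → X,
    ContinuousOn γ (Set.Icc a b) → γ a ∈ Z → γ b ∈ Z →
    eVariationOn γ (Set.Icc a b) ≤ ENNReal.ofReal (q * dist (γ a) (γ b)) →
    ∃ s ∈ Set.Icc a b,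
      EMetric.infEdist (γ s) (recRemoved Z (γ a) (γ b)) ≤ ENNReal.ofReal (ρ q)

/-- `Z` is recurrent: `ρ(q) < ∞` for every `q ≥ 1`, i.e. some real-valued function `ρ`
witnesses recurrence. -/
def IsRecurrent (Z : Set X) : Prop := ∃ ρ : ℝ → ℝ, IsRecurrentWith Z ρ

/-- `Z` is contracting with gauge `σ`: `σ(r)` bounds `diam(π_Z(x) ∪ π_Z(y))` whenever
`d(x,y) ≤ d(x,Z) ≤ r`, and `σ(r)/r → 0` as `r → ∞`. -/
def IsContractingWith (Z : Set X) (σ : ℝ → ℝ) : Prop :=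
  (∀ r : ℝ, 0 ≤ r → ∀ x y : X, dist x y ≤ Metric.infDist x Z → Metric.infDist x Z ≤ r →
      ∀ p ∈ projSet Z x ∪ projSet Z y, ∀ p' ∈ projSet Z x ∪ projSet Z y,
        dist p p' ≤ σ r) ∧
    Filter.Tendsto (fun r => σ r / r) Filter.atTop (nhds 0)

/-- `Z` is contracting: there is a sublinear contraction gauge. -/
def IsContracting (Z : Set X) : Prop := ∃ σ : ℝ → ℝ, IsContractingWith Z σ

/-- `Z` is strongly contracting: a single constant `C ≥ 0` bounds
`diam(π_Z(x) ∪ π_Z(y))` whenever `d(x,y) ≤ d(x,Z)`. -/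
def IsStronglyContracting (Z : Set X) : Prop :=
  ∃ C : ℝ, 0 ≤ C ∧ ∀ x y : X, dist x y ≤ Metric.infDist x Z →
    ∀ p ∈ projSet Z x ∪ projSet Z y, ∀ p' ∈ projSet Z x ∪ projSet Z y, dist p p' ≤ C

/-- `X` is `δ`-hyperbolic: every geodesic triangle is `δ`-thin, i.e. each side lies in the
`δ`-neighborhood of the union of the other two sides. -/
def IsDeltaHyperbolic (X : Type*) [MetricSpace X] (δ : ℝ) : Prop :=
  ∀ x y z : X, ∀ γ₁ γ₂ γ₃ : ℝ → X,
    IsGeodesicFrom γ₁ x y → IsGeodesicFrom γ₂ y z → IsGeodesicFrom γ₃ x z →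
    ∀ t ∈ Set.Icc (0 : ℝ) (dist x y),
      Metric.infDist (γ₁ t)
        (γ₂ '' Set.Icc (0 : ℝ) (dist y z) ∪ γ₃ '' Set.Icc (0 : ℝ) (dist x z)) ≤ δ

/-- `Z` is quasi-convex: every geodesic segment with both endpoints in `Z` lies in the
`C`-neighborhood of `Z`, for some `C ≥ 0`. -/
def IsQuasiConvex (Z : Set X) : Prop :=
  ∃ C : ℝ, 0 ≤ C ∧ ∀ p ∈ Z, ∀ q ∈ Z, ∀ γ : ℝ → X, IsGeodesicFrom γ p q →
    ∀ t ∈ Set.Icc (0 : ℝ) (dist p q), Metric.infDist (γ t) Z ≤ C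

end Defs

/-! Discretise the path from `z` to `z'` into a chain of unit steps, and repeatedly replace a
subchain that is longer than `L` times (the distance between its ends plus one) by a geodesic.
Each replacement shortens the chain by much more than the width of the band of distances from `z`
occupied by the new geodesic, so the process ends with a taut chain, an `(L, 2)`-quasi-geodesic
that stays `μ(L, 2)`-close to `Z`, while the bands cover less than `d(z, z') / 12`. Some distance
near `d(z, z') / 2` escapes all bands, and the chain point at that distance is a point of the path
close to a point of `Z'`. When `d(z, z')` is small compared with `μ(L, 2)`, a point of `Z'` near
`z` is found instead on a geodesic from `z` to a far point of the unbounded set `Z`. -/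

open MeasureTheory

section ChainAppend

variable {X : Type*}

def chainAppend (x : ℕ → X) (n : ℕ) (y : ℕ → X) : ℕ → X :=
  fun k => if k ≤ n then x k else y (k - n)

variable {x y : ℕ → X} {n m : ℕ}

lemma chainAppend_of_le {k : ℕ} (hk : k ≤ n) : chainAppend x n y k = x k := if_pos hk

lemma chainAppend_add (h : x n = y 0) (k : ℕ) : chainAppend x n y (n + k) = y k := by
  unfold chainAppend
  split_ifs with hk
  · obtain rfl : k = 0 := by omega
    simpa using h
  · simp

lemma forall_chainAppend (h : x n = y 0) {P : X → Prop} (hx : ∀ k ≤ n, P (x k))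
    (hy : ∀ k ≤ m, P (y k)) : ∀ k ≤ n + m, P (chainAppend x n y k) := by
  intro k hk
  rcases le_or_gt k n with hkn | hnk
  · rw [chainAppend_of_le hkn]
    exact hx k hkn
  · obtain ⟨l, rfl⟩ := Nat.exists_eq_add_of_le hnk.le
    rw [chainAppend_add h]
    exact hy l (by omega)

end ChainAppend

section Chains

variable {X : Type*} [PseudoMetricSpace X]

def chainLength (x : ℕ → X) (n : ℕ) : ℝ := ∑ k ∈ Finset.range n, dist (x k) (x (k + 1))

def StepsLeOne (x : ℕ → X) (n : ℕ) : Prop := ∀ k < n, dist (x k) (x (k + 1)) ≤ 1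

lemma chainLength_nonneg (x : ℕ → X) (n : ℕ) : 0 ≤ chainLength x n :=
  Finset.sum_nonneg fun _ _ => dist_nonneg

lemma chainLength_add (x : ℕ → X) (n m : ℕ) :
    chainLength x (n + m) = chainLength x n + chainLength (fun k => x (n + k)) m := by
  simp only [chainLength, Finset.sum_range_add, add_assoc]

lemma chainLength_mono (x : ℕ → X) : Monotone (chainLength x) := by
  intro n m h
  obtain ⟨l, rfl⟩ := Nat.exists_eq_add_of_le h
  rw [chainLength_add]
  exact le_add_of_nonneg_right (chainLength_nonneg _ _)

lemma dist_le_chainLength (x : ℕ → X) (n : ℕ) : dist (x 0) (x n) ≤ chainLength x n := by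
  induction n with
  | zero => simp [chainLength]
  | succ n ih =>
    rw [chainLength, Finset.sum_range_succ]
    exact (dist_triangle _ (x n) _).trans (add_le_add_left ih _)

lemma dist_le_chainLength_sub (x : ℕ → X) {i j : ℕ} (hij : i ≤ j) :
    dist (x i) (x j) ≤ chainLength x j - chainLength x i := by
  obtain ⟨l, rfl⟩ := Nat.exists_eq_add_of_le hij
  rw [chainLength_add, add_sub_cancel_left]
  simpa using dist_le_chainLength (fun k => x (i + k)) l

namespace StepsLeOne

variable {x : ℕ → X} {n : ℕ}

lemma mono (hx : StepsLeOne x n) {m : ℕ} (hmn : m ≤ n) : StepsLeOne x m :=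
  fun k hk => hx k (hk.trans_le hmn)

lemma shift (hx : StepsLeOne x n) (j : ℕ) : StepsLeOne (fun k => x (j + k)) (n - j) :=
  fun k hk => hx (j + k) (by omega)

lemma chainLength_add_le (hx : StepsLeOne x n) {i l : ℕ} (hil : i + l ≤ n) :
    chainLength x (i + l) ≤ chainLength x i + l := by
  rw [chainLength_add, chainLength]
  gcongr
  exact (Finset.sum_le_sum fun k hk => hx (i + k) (by simp at hk; omega)).trans (by simp)

end StepsLeOne

section Append

variable {x y : ℕ → X} {n m : ℕ}

lemma chainLength_chainAppend (h : x n = y 0) (m : ℕ) :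
    chainLength (chainAppend x n y) (n + m) = chainLength x n + chainLength y m := by
  rw [chainLength_add]
  congr 1
  · refine Finset.sum_congr rfl fun k hk => ?_
    rw [Finset.mem_range] at hk
    rw [chainAppend_of_le hk.le, chainAppend_of_le hk]
  · simp only [chainAppend_add h]

lemma StepsLeOne.chainAppend (hx : StepsLeOne x n) (hy : StepsLeOne y m) (h : x n = y 0) :
    StepsLeOne (chainAppend x n y) (n + m) := by
  intro k hk
  rcases lt_or_ge k n with hkn | hnk
  · rw [chainAppend_of_le hkn.le, chainAppend_of_le hkn]
    exact hx k hkn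
  · obtain ⟨l, rfl⟩ := Nat.exists_eq_add_of_le hnk
    rw [add_assoc, chainAppend_add h, chainAppend_add h]
    exact hy l (by omega)

end Append

/-- `x'` is `x` with the subchain `x i, …, x j` replaced by `y 0, …, y m`. -/
lemma exists_splice {x : ℕ → X} {n i j : ℕ} (hij : i ≤ j) (hjn : j ≤ n) (hx : StepsLeOne x n)
    {y : ℕ → X} {m : ℕ} (hy : StepsLeOne y m) (hy0 : y 0 = x i) (hym : y m = x j) :
    ∃ x' : ℕ → X, x' 0 = x 0 ∧ x' (i + m + (n - j)) = x n ∧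
      StepsLeOne x' (i + m + (n - j)) ∧
      chainLength x' (i + m + (n - j)) =
        chainLength x n - (chainLength x j - chainLength x i) + chainLength y m ∧
      ∀ P : X → Prop, (∀ k ≤ n, P (x k)) → (∀ k ≤ m, P (y k)) →
        ∀ k ≤ i + m + (n - j), P (x' k) := by
  have h₁ : x i = y 0 := hy0.symm
  have h₂ : chainAppend x i y (i + m) = x (j + 0) := by rw [chainAppend_add h₁, hym, Nat.add_zero]
  refine ⟨chainAppend (chainAppend x i y) (i + m) (fun k => x (j + k)), ?_, ?_, ?_, ?_, ?_⟩
  · rw [chainAppend_of_le (Nat.zero_le _), chainAppend_of_le (Nat.zero_le _)]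
  · rw [chainAppend_add h₂, Nat.add_sub_cancel' hjn]
  · exact ((hx.mono (hij.trans hjn)).chainAppend hy h₁).chainAppend (hx.shift j) h₂
  · have hsplit := chainLength_add x j (n - j)
    rw [Nat.add_sub_cancel' hjn] at hsplit
    rw [chainLength_chainAppend h₂, chainLength_chainAppend h₁, hsplit]
    ring
  · intro P hPx hPy
    refine forall_chainAppend h₂ (forall_chainAppend h₁ (fun k hk => hPx k (by omega)) hPy) ?_
    exact fun k hk => hPx (j + k) (by omega)

end Chains

section Taut

variable {X : Type*} [MetricSpace X]

def IsTautChain (L : ℝ) (x : ℕ → X) (n : ℕ) : Prop :=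
  ∀ i j, i ≤ j → j ≤ n → chainLength x j - chainLength x i ≤ L * (dist (x i) (x j) + 1)

def IsMorseBound (Z : Set X) (L A M : ℝ) : Prop :=
  ∀ a b : ℝ, ∀ γ : ℝ → X, IsQuasiGeodesicOn L A a b γ → γ a ∈ Z → γ b ∈ Z →
    ∀ s ∈ Set.Icc a b, Metric.infDist (γ s) Z ≤ M

variable {x : ℕ → X} {n : ℕ}

lemma StepsLeOne.chainLength_findGreatest_mem_Icc (hx : StepsLeOne x n) {u : ℝ}
    (hu : u ∈ Icc 0 (chainLength x n)) :
    chainLength x (Nat.findGreatest (fun i => chainLength x i ≤ u) n) ∈ Icc (u - 1) u := by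
  set i := Nat.findGreatest (fun i => chainLength x i ≤ u) n
  have hi : chainLength x i ≤ u :=
    Nat.findGreatest_spec (P := fun i => chainLength x i ≤ u) (Nat.zero_le n)
      (by simpa [chainLength] using hu.1)
  refine ⟨?_, hi⟩
  rcases (Nat.findGreatest_le n : i ≤ n).lt_or_eq with hin | hin
  · have hnext : u < chainLength x (i + 1) :=
      not_le.mp (Nat.findGreatest_is_greatest (Nat.lt_succ_self i) hin)
    have hstep : chainLength x (i + 1) ≤ chainLength x i + 1 := by
      exact_mod_cast hx.chainLength_add_le (l := 1) hin
    linarith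
  · have hi_eq : i = n := hin
    rw [hi_eq]
    linarith [hu.2]

/-- `θ u` is the last vertex of the chain reached within arc length `u`. -/
lemma IsTautChain.exists_quasiGeodesic {L : ℝ} (hL : 1 ≤ L) (hx : StepsLeOne x n)
    (ht : IsTautChain L x n) :
    ∃ θ : ℝ → X, IsQuasiGeodesicOn L 2 0 (chainLength x n) θ ∧
      ∀ k ≤ n, θ (chainLength x k) = x k := by
  classical
  set I : ℝ → ℕ := fun u => Nat.findGreatest (fun i => chainLength x i ≤ u) n
  have hI : ∀ {u v}, u ≤ v → I u ≤ I v := fun huv =>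
    Nat.findGreatest_mono_left (fun _ h => h.trans huv) n
  have hquasi : ∀ u ∈ Icc 0 (chainLength x n), ∀ v ∈ Icc 0 (chainLength x n), u ≤ v →
      (v - u) / L - 2 ≤ dist (x (I u)) (x (I v)) ∧ dist (x (I u)) (x (I v)) ≤ L * (v - u) + 2 := by
    intro u hu v hv huv
    have hIu := hx.chainLength_findGreatest_mem_Icc hu
    have hIv := hx.chainLength_findGreatest_mem_Icc hv
    have hupper := dist_le_chainLength_sub x (hI huv)
    have hlower := ht _ _ (hI huv) (Nat.findGreatest_le n)
    simp only [mem_Icc] at hIu hIv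
    constructor
    · rw [sub_le_iff_le_add, div_le_iff₀ (by linarith)]
      nlinarith
    · nlinarith
  refine ⟨fun u => x (I u), ⟨chainLength_nonneg x n, fun s hs t ht' => ?_⟩, fun k hk => ?_⟩
  · rcases le_total s t with hst | hts
    · rw [abs_sub_comm, abs_of_nonneg (sub_nonneg.mpr hst)]
      exact hquasi s hs t ht' hst
    · rw [abs_of_nonneg (sub_nonneg.mpr hts), dist_comm]
      exact hquasi t ht' s hs hts
  · have hkI : k ≤ I (chainLength x k) := Nat.le_findGreatest hk le_rfl
    have hle := (hx.chainLength_findGreatest_mem_Icc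
      ⟨chainLength_nonneg x k, chainLength_mono x hk⟩).2
    have h0 := dist_le_chainLength_sub x hkI
    have h1 := chainLength_mono x hkI
    exact (dist_le_zero.mp (by linarith)).symm

lemma IsTautChain.infDist_le {Z : Set X} {L M : ℝ} (hM : IsMorseBound Z L 2 M) (hL : 1 ≤ L)
    (hx : StepsLeOne x n) (ht : IsTautChain L x n) (h0 : x 0 ∈ Z) (hn : x n ∈ Z) :
    ∀ k ≤ n, Metric.infDist (x k) Z ≤ M := by
  obtain ⟨θ, hθ, hθx⟩ := ht.exists_quasiGeodesic hL hx
  have hθ0 : θ 0 = x 0 := by simpa [chainLength] using hθx 0 (Nat.zero_le n)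
  intro k hk
  rw [← hθx k hk]
  exact hM _ _ θ hθ (hθ0 ▸ h0) (hθx n le_rfl ▸ hn) _
    ⟨chainLength_nonneg x k, chainLength_mono x hk⟩

end Taut

section Geodesic

variable {X : Type*} [MetricSpace X]

lemma IsGeodesicFrom.isQuasiGeodesicOn {γ : ℝ → X} {p q : X} (hγ : IsGeodesicFrom γ p q) :
    IsQuasiGeodesicOn 1 0 0 (dist p q) γ :=
  ⟨dist_nonneg, fun s hs t ht => by simp [hγ.2.2 s hs t ht]⟩

lemma IsGeodesicFrom.exists_chain {γ : ℝ → X} {p q : X} (hγ : IsGeodesicFrom γ p q) :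
    ∃ (m : ℕ) (y : ℕ → X), y 0 = p ∧ y m = q ∧ (m : ℝ) ≤ dist p q + 1 ∧ StepsLeOne y m ∧
      chainLength y m = dist p q ∧ ∀ k ≤ m, dist (y k) p ≤ dist p q := by
  set F := dist p q
  set m := ⌊F⌋₊ + 1
  set s := F / m
  have hm : (0 : ℝ) < m := by positivity
  have hs : 0 ≤ s := div_nonneg dist_nonneg hm.le
  have hms : (m : ℝ) * s = F := mul_div_cancel₀ F hm.ne'
  have hks : ∀ k ≤ m, (k : ℝ) * s ≤ F := fun k hk =>
    hms ▸ mul_le_mul_of_nonneg_right (by exact_mod_cast hk) hs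
  have hdist : ∀ k ≤ m, ∀ l ≤ m, dist (γ (k * s)) (γ (l * s)) = |(k : ℝ) - l| * s :=
    fun k hk l hl => by
      rw [hγ.2.2 _ ⟨by positivity, hks k hk⟩ _ ⟨by positivity, hks l hl⟩, ← sub_mul, abs_mul,
        abs_of_nonneg hs]
  have hstep : ∀ k < m, dist (γ (k * s)) (γ ((k + 1 : ℕ) * s)) = s := fun k hk => by
    rw [hdist k hk.le (k + 1) hk]
    simp
  refine ⟨m, fun k => γ (k * s), by simpa using hγ.1, by simpa [hms] using hγ.2.1,
    by simpa [m] using Nat.floor_le dist_nonneg, fun k hk => ?_, ?_, fun k hk => ?_⟩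
  · rw [hstep k hk, div_le_one hm]
    exact (Nat.lt_floor_add_one F).le.trans (by simp [m])
  · rw [chainLength, Finset.sum_congr rfl fun k hk => hstep k (Finset.mem_range.mp hk)]
    simpa using hms
  · have h := hdist k hk 0 (Nat.zero_le m)
    simp only [Nat.cast_zero, zero_mul, hγ.1, sub_zero, Nat.abs_cast] at h
    rw [h]
    exact hks k hk

end Geodesic

section Shortcut

variable {X : Type*} [MetricSpace X]

/-- `x` arises from a unit-step chain in `G` of length at most `ℓ` by replacing subchains with
geodesics. The distances from `o` of points off `G` are covered, with margin `1`, by `S`, and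
the replacements removed at least `(L - 1) / 2` times as much length as the measure they added
to `S`. -/
def IsShortcutChain (G : Set X) (o : X) (L ℓ : ℝ) (x : ℕ → X) (n : ℕ) (S : Set ℝ) (β : ℝ) :
    Prop :=
  StepsLeOne x n ∧ 0 ≤ β ∧ volume S ≤ ENNReal.ofReal β ∧
    (L - 1) * β + 2 * chainLength x n ≤ 2 * ℓ ∧ ∀ k ≤ n, x k ∈ G ∨ closedBall (dist o (x k)) 1 ⊆ S

variable {G : Set X} {o : X} {L ℓ : ℝ} {x : ℕ → X} {n : ℕ} {S : Set ℝ} {β : ℝ}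

lemma IsShortcutChain.exists_shorter (hX : IsGeodesicSpace X) (hL : 1 ≤ L)
    (h : IsShortcutChain G o L ℓ x n S β) (hnt : ¬ IsTautChain L x n) :
    ∃ n' < n, ∃ (x' : ℕ → X) (S' : Set ℝ) (β' : ℝ), x' 0 = x 0 ∧ x' n' = x n ∧
      IsShortcutChain G o L ℓ x' n' S' β' := by
  obtain ⟨hx, hβ0, hS, hβ, hG⟩ := h
  simp only [IsTautChain, not_forall, not_le] at hnt
  obtain ⟨i, j, hij, hjn, hgap⟩ := hnt
  set F := dist (x i) (x j)
  obtain ⟨γ, hγ⟩ := hX (x i) (x j)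
  obtain ⟨m, y, hy0, hym, hmF, hy, hylen, hyF⟩ := hγ.exists_chain
  obtain ⟨l, rfl⟩ := Nat.exists_eq_add_of_le hij
  have hml : m < l := by
    have := hx.chainLength_add_le hjn
    have : F + 1 ≤ L * (F + 1) := le_mul_of_one_le_left (by positivity) hL
    exact_mod_cast (show (m : ℝ) < l by linarith)
  obtain ⟨x', hx'0, hx'n, hx', hx'len, hx'P⟩ := exists_splice hij hjn hx hy hy0 hym
  set B := closedBall (dist o (x i)) (F + 1)
  refine ⟨_, by omega, x', S ∪ B, β + 2 * (F + 1), hx'0, hx'n, hx', by positivity, ?_, ?_, ?_⟩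
  · calc volume (S ∪ B) ≤ volume S + volume B := measure_union_le _ _
      _ ≤ ENNReal.ofReal β + ENNReal.ofReal (2 * (F + 1)) := by
        rw [Real.volume_closedBall]
        gcongr
      _ = ENNReal.ofReal (β + 2 * (F + 1)) := (ENNReal.ofReal_add hβ0 (by positivity)).symm
  · have : (L - 1) * (β + 2 * (F + 1)) = (L - 1) * β + 2 * (L * (F + 1)) - 2 * (F + 1) := by ring
    linarith
  · refine hx'P (fun p => p ∈ G ∨ closedBall (dist o p) 1 ⊆ S ∪ B)
      (fun k hk => (hG k hk).imp_right (·.trans subset_union_left))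
      (fun k hk => Or.inr ((closedBall_subset_closedBall' ?_).trans subset_union_right))
    linarith [dist_dist_dist_le_right o (y k) (x i), hyF k hk]

lemma IsShortcutChain.exists_taut (hX : IsGeodesicSpace X) (hL : 1 ≤ L)
    (h : IsShortcutChain G o L ℓ x n S β) :
    ∃ (n' : ℕ) (x' : ℕ → X) (S' : Set ℝ) (β' : ℝ), x' 0 = x 0 ∧ x' n' = x n ∧
      IsShortcutChain G o L ℓ x' n' S' β' ∧ IsTautChain L x' n' := by
  induction n using Nat.strong_induction_on generalizing x S β with
  | _ n ih =>
    by_cases ht : IsTautChain L x n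
    · exact ⟨n, x, S, β, rfl, rfl, h, ht⟩
    obtain ⟨n', hn', x', S', β', h0, hn, h'⟩ := h.exists_shorter hX hL ht
    obtain ⟨n'', x'', S'', β'', h0', hn'', h'', ht''⟩ := ih n' hn' h'
    exact ⟨n'', x'', S'', β'', h0'.trans h0, hn''.trans hn, h'', ht''⟩

end Shortcut

section Paths

variable {X : Type*} [PseudoMetricSpace X]

lemma exists_chain_of_continuousOn {γ : ℝ → X} {a b : ℝ} (hab : a ≤ b)
    (hγ : ContinuousOn γ (Icc a b)) :
    ∃ (n : ℕ) (t : ℕ → ℝ), Monotone t ∧ t 0 = a ∧ t n = b ∧ (∀ k, t k ∈ Icc a b) ∧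
      StepsLeOne (γ ∘ t) n := by
  obtain ⟨δ, hδ, hγδ⟩ := Metric.uniformContinuousOn_iff_le.mp
    (isCompact_Icc.uniformContinuousOn_of_continuous hγ) 1 one_pos
  set t : ℕ → ℝ := fun k => min (a + k * δ) b
  have hts : ∀ k, t k ∈ Icc a b := fun k =>
    ⟨le_min (le_add_of_nonneg_right (by positivity)) hab, min_le_right _ _⟩
  have hstep : ∀ k, dist (t k) (t (k + 1)) ≤ δ := fun k => by
    refine (Real.dist_eq _ _ ▸ abs_min_sub_min_le_max _ _ _ _).trans ?_
    simp [← sub_sub, ← sub_mul, abs_of_pos hδ, hδ.le]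
  refine ⟨⌈(b - a) / δ⌉₊, t, fun k l hkl => min_le_min_right b (by gcongr), by simp [t, hab],
    min_eq_right ?_, hts, fun k _ => hγδ _ (hts k) _ (hts (k + 1)) (hstep k)⟩
  linarith [(div_le_iff₀ hδ).mp (Nat.le_ceil ((b - a) / δ))]

lemma ofReal_chainLength_le_eVariationOn {γ : ℝ → X} {s : Set ℝ} {t : ℕ → ℝ} (ht : Monotone t)
    (hts : ∀ k, t k ∈ s) (n : ℕ) :
    ENNReal.ofReal (chainLength (γ ∘ t) n) ≤ eVariationOn γ s := by
  rw [chainLength, ENNReal.ofReal_sum_of_nonneg fun _ _ => dist_nonneg]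
  refine le_of_eq_of_le (Finset.sum_congr rfl fun k _ => ?_) (eVariationOn.sum_le ht hts)
  rw [← edist_dist, edist_comm]
  rfl

lemma infEDist_le_ofReal_of_dist_le {x w : X} {s : Set X} {r : ℝ} (hw : w ∈ s)
    (h : dist x w ≤ r) : Metric.infEDist x s ≤ ENNReal.ofReal r :=
  (Metric.infEDist_le_edist_of_mem hw).trans ((edist_le_ofReal (dist_nonneg.trans h)).mpr h)

end Paths

lemma exists_mem_closedBall_of_le_add_one {r : ℕ → ℝ} {y : ℝ} (h0 : r 0 ≤ y) :
    ∀ {n : ℕ}, y ≤ r n → (∀ k < n, r (k + 1) ≤ r k + 1) → ∃ k ≤ n, y ∈ closedBall (r k) 1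
  | 0, hn, _ => ⟨0, le_rfl, by rw [mem_closedBall, Real.dist_eq, abs_le]; constructor <;> linarith⟩
  | n + 1, hn, hstep => by
    by_cases hy : y ≤ r n
    · obtain ⟨k, hk, hyk⟩ := exists_mem_closedBall_of_le_add_one h0 hy
        fun k hk => hstep k (by omega)
      exact ⟨k, by omega, hyk⟩
    · refine ⟨n + 1, le_rfl, ?_⟩
      rw [mem_closedBall, Real.dist_eq, abs_le]
      constructor <;> linarith [hstep n n.lt_succ_self]

section Recurrence

variable {X : Type*} [MetricSpace X] {Z : Set X}

lemma mem_recRemoved {z z' w : X} (hw : w ∈ Z) (hz : dist z z' / 3 ≤ dist z w)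
    (hz' : dist z z' / 3 ≤ dist z' w) : w ∈ recRemoved Z z z' :=
  ⟨hw, by simpa only [mem_union, mem_ball, not_or, not_lt, dist_comm w] using ⟨hz, hz'⟩⟩

/-- `w` is close to the point at distance `r + M + 1` from `z` on a geodesic from `z` to a far
point of `Z`. -/
lemma exists_mem_dist_mem_Icc (hX : IsGeodesicSpace X) (hZ : ¬ Bornology.IsBounded Z) {M : ℝ}
    (hM : IsMorseBound Z 1 0 M) {z : X} (hz : z ∈ Z) {r : ℝ} (hr : 0 ≤ r) :
    ∃ w ∈ Z, r ≤ dist z w ∧ dist z w ≤ r + 2 * M + 2 := by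
  set R := r + M + 1
  obtain ⟨ζ, hζ, hzζ⟩ : ∃ ζ ∈ Z, R < dist z ζ := by
    by_contra! h
    exact hZ (isBounded_closedBall.subset fun w hw => mem_closedBall'.mpr (h w hw))
  obtain ⟨g, hg⟩ := hX z ζ
  have hnear := hM _ _ g hg.isQuasiGeodesicOn (by rwa [hg.1]) (by rwa [hg.2.1])
  have hM0 : 0 ≤ M := infDist_nonneg.trans (hnear 0 ⟨le_rfl, dist_nonneg⟩)
  have hR : R ∈ Icc 0 (dist z ζ) := ⟨by positivity, hzζ.le⟩
  have hgR : dist z (g R) = R := by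
    simpa [hg.1, abs_of_nonneg hR.1] using hg.2.2 0 ⟨le_rfl, dist_nonneg⟩ R hR
  obtain ⟨w, hw, hgw⟩ := (infDist_lt_iff ⟨z, hz⟩).mp ((hnear R hR).trans_lt (lt_add_one M))
  refine ⟨w, hw, ?_, ?_⟩
  · linarith [dist_triangle z w (g R), dist_comm w (g R)]
  · linarith [dist_triangle z (g R) w]

lemma exists_mem_recRemoved_dist_le (hX : IsGeodesicSpace X) (hZ : ¬ Bornology.IsBounded Z)
    {M : ℝ} (hM : IsMorseBound Z 1 0 M) {z : X} (hz : z ∈ Z) (z' : X) :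
    ∃ w ∈ recRemoved Z z z', dist z w ≤ 4 * dist z z' / 3 + 2 * M + 2 := by
  obtain ⟨w, hw, hzw, hzw'⟩ := exists_mem_dist_mem_Icc hX hZ hM hz (r := 4 * dist z z' / 3)
    (by positivity)
  refine ⟨w, mem_recRemoved hw ?_ ?_, hzw'⟩
  · linarith [dist_nonneg (x := z) (y := z')]
  · linarith [dist_triangle z z' w]

lemma exists_near_recRemoved (hX : IsGeodesicSpace X) {q M : ℝ} (hq : 1 ≤ q)
    (hM : IsMorseBound Z (48 * q) 2 M) {γ : ℝ → X} {a b : ℝ} (hab : a ≤ b)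
    (hγ : ContinuousOn γ (Icc a b)) (ha : γ a ∈ Z) (hb : γ b ∈ Z)
    (hvar : eVariationOn γ (Icc a b) ≤ ENNReal.ofReal (q * dist (γ a) (γ b)))
    (hd : 8 * (M + 2) ≤ dist (γ a) (γ b)) :
    ∃ s ∈ Icc a b, ∃ w ∈ recRemoved Z (γ a) (γ b), dist (γ s) w ≤ M + 1 := by
  set z := γ a
  set d := dist z (γ b)
  obtain ⟨n, t, ht, ht0, htn, hts, hstep⟩ := exists_chain_of_continuousOn hab hγ
  have hlen : chainLength (γ ∘ t) n ≤ q * d :=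
    (ENNReal.ofReal_le_ofReal_iff (by positivity)).mp
      ((ofReal_chainLength_le_eVariationOn ht hts n).trans hvar)
  have hinit : IsShortcutChain (γ '' Icc a b) z (48 * q) (q * d) (γ ∘ t) n ∅ 0 :=
    ⟨hstep, le_rfl, by simp, by linarith, fun k _ => Or.inl (mem_image_of_mem γ (hts k))⟩
  obtain ⟨n', x, S, β, hx0, hxn, ⟨hx, hβ0, hS, hβ, hG⟩, htaut⟩ :=
    hinit.exists_taut hX (by linarith)
  simp only [Function.comp_apply, ht0, htn] at hx0 hxn
  replace hx0 : x 0 = z := hx0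
  have hnear := htaut.infDist_le hM (by linarith) hx (hx0 ▸ ha) (hxn ▸ hb)
  have hM0 : 0 ≤ M := infDist_nonneg.trans (hnear 0 (Nat.zero_le _))
  -- `L = 48 q` makes the bands' total measure `β ≤ 2 q d / (48 q - 1)` less than `d / 12`.
  have hβd : β < d / 12 := by nlinarith [chainLength_nonneg x n']
  obtain ⟨y, hy, hyS⟩ : ∃ y ∈ Icc (11 * d / 24) (13 * d / 24), y ∉ S := by
    by_contra! h
    have hvol := (measure_mono h).trans hS
    rw [Real.volume_Icc, ENNReal.ofReal_le_ofReal_iff hβ0] at hvol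
    linarith
  obtain ⟨k, hk, hyk⟩ :=
    exists_mem_closedBall_of_le_add_one (r := fun k => dist z (x k)) (y := y)
    (by simp only [hx0, dist_self]; linarith [hy.1]) (by rw [hxn]; linarith [hy.2])
    fun k hk => by linarith [dist_triangle z (x k) (x (k + 1)), hx k hk]
  obtain ⟨u, hu, hux⟩ := (hG k hk).resolve_right fun hsub => hyS (hsub hyk)
  obtain ⟨w, hw, hxw⟩ := (infDist_lt_iff ⟨z, ha⟩).mp ((hnear k hk).trans_lt (lt_add_one M))
  rw [mem_closedBall, Real.dist_eq, abs_le] at hyk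
  refine ⟨u, hu, w, mem_recRemoved hw ?_ ?_, hux ▸ hxw.le⟩
  · linarith [dist_triangle z w (x k), dist_comm w (x k), hy.1]
  · linarith [dist_triangle z w (γ b), dist_triangle z (x k) w, dist_comm w (γ b), hy.2]

end Recurrence

theorem morse_implies_recurrent_general
    {X : Type*} [MetricSpace X] (hX : IsGeodesicSpace X)
    (Z : Set X) (hZunbdd : ¬ Bornology.IsBounded Z)
    (hmorse : IsMorse Z) :
    IsRecurrent Z := by
  obtain ⟨M₁, hM₁⟩ : ∃ M, IsMorseBound Z 1 0 M := hmorse 1 le_rfl 0 le_rfl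
  choose! μ hμ using fun q (hq : 1 ≤ q) =>
    (hmorse (48 * q) (by linarith) 2 zero_le_two : ∃ M, IsMorseBound Z (48 * q) 2 M)
  refine ⟨fun q => max (μ q + 1) (4 * (8 * (μ q + 2)) / 3 + 2 * M₁ + 2),
    fun q hq a b hab γ hγ ha hb hvar => ?_⟩
  rcases le_or_gt (8 * (μ q + 2)) (dist (γ a) (γ b)) with hd | hd
  · obtain ⟨s, hs, w, hw, hsw⟩ := exists_near_recRemoved hX hq (hμ q hq) hab hγ ha hb hvar hd
    exact ⟨s, hs, infEDist_le_ofReal_of_dist_le hw (hsw.trans (le_max_left _ _))⟩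
  · obtain ⟨w, hw, hzw⟩ := exists_mem_recRemoved_dist_le hX hZunbdd hM₁ ha (γ b)
    refine ⟨a, ⟨le_rfl, hab⟩, infEDist_le_ofReal_of_dist_le hw (hzw.trans ?_)⟩
    exact le_max_of_le_right (by linarith)

/-- In a geodesic metric space, a closed unbounded Morse subset is recurrent. -/
theorem morse_implies_recurrent
    {X : Type*} [MetricSpace X] (hX : IsGeodesicSpace X)
    (Z : Set X) (hZclosed : IsClosed Z) (hZunbdd : ¬ Bornology.IsBounded Z)
    (hmorse : IsMorse Z) :
    IsRecurrent Z :=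
  morse_implies_recurrent_general hX Z hZunbdd hmorse
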